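/- Let K be a field, n ≥ 1, and let T_{ijk} (1 ≤ i,j ≤ n, k ∈ {1,2}) be independent indeterminates. Set X = (T_{ij1}) and Y = (T_{ij2}), and define f_{k,n-k} ∈ K[T] as the degree-(k,n-k) bihomogeneous component of det(X+Y) (so f_{k,n-k} is the sum over k-subsets S of {1,...,n} of det of the matrix whose columns are taken from X on S and Y off S). Then the n+1 polynomials f_{n,0}, f_{n-1,1}, ..., f_{0,n} are algebraically independent over K. -/

import Mathlib

/-!
Specialize `X` to the diagonal matrix `diag(x₁, …, xₙ)` and `Y` to `y • 1`. Then `f_{k,n-k}`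
becomes `y ^ (n - k) * e_k(x)`, with `e_k` the `k`-th elementary symmetric polynomial. By the
fundamental theorem of symmetric polynomials `e₁, …, eₙ` are algebraically independent, hence so
are `y, e₁, …, eₙ`. The images `yⁿ, yⁿ⁻¹ e₁, …, eₙ` are monomials in these with `ℕ`-linearly
independent exponent vectors, so they are algebraically independent, and algebraic independence
lifts back along the specialization.
-/

open MvPolynomial Finset

theorem MvPolynomial.algebraicIndependent_monomial_one {ι σ R : Type*} [CommRing R]
    {v : ι → σ →₀ ℕ} (hv : LinearIndependent ℕ v) :
    AlgebraicIndependent R fun i => monomial (v i) (1 : R) := by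
  rw [algebraicIndependent_iff_injective_aeval]
  -- substituting the monomials is `mapDomain` along `e ↦ ∑ eᵢ • vᵢ`, which is injective by `hv`
  have h : aeval (fun i => monomial (v i) (1 : R)) =
      AddMonoidAlgebra.mapDomainAlgHom R R (Finsupp.linearCombination ℕ v).toAddMonoidHom := by
    refine algHom_ext fun i => ?_
    rw [aeval_X, X, AddMonoidAlgebra.mapDomainAlgHom_apply]
    simp [monomial]
  rw [h]
  exact AddMonoidAlgebra.mapDomain_injective hv

open Finsupp (single linearCombination) in
theorem linearIndependent_optionElim_single {ι : Type*} {N : ℕ} (hN : N ≠ 0) (d : ι → ℕ) :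
    LinearIndependent ℕ fun o : Option ι =>
      o.elim (single none N) fun i => single none (d i) + single (some i) 1 := by
  set v : Option ι → Option ι →₀ ℕ :=
    fun o => o.elim (single none N) fun i => single none (d i) + single (some i) 1
  have hsome (e : Option ι →₀ ℕ) (i : ι) : linearCombination ℕ v e (some i) = e (some i) := by
    rw [Finsupp.linearCombination_apply, Finsupp.sum_apply, Finsupp.sum, sum_eq_single (some i)]
    · simp [v]
    · rintro (_ | j) _ hj
      · simp [v]
      · simp [v, hj]
    · intro h
      simp [Finsupp.notMem_support_iff.mp h]
  have hsplit (e : Option ι →₀ ℕ) :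
      linearCombination ℕ v e = e none • v none + linearCombination ℕ v (e.erase none) := by
    rw [← Finsupp.linearCombination_single, ← map_add, Finsupp.single_add_erase]
  intro e e' h
  have herase : e.erase none = e'.erase none := by
    ext (_ | i)
    · simp
    · simpa [hsome] using DFunLike.congr_fun h (some i)
  rw [hsplit e, hsplit e', herase] at h
  have hnone : e none * N = e' none * N := by
    simpa [v] using DFunLike.congr_fun (add_right_cancel h) none
  rw [← Finsupp.single_add_erase none e, ← Finsupp.single_add_erase none e', herase,
    Nat.eq_of_mul_eq_mul_right (Nat.pos_of_ne_zero hN) hnone]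

theorem AlgebraicIndependent.optionElim_pow_mul {ι R A : Type*} [CommRing R] [CommRing A]
    [Algebra R A] {a : A} {b : ι → A} (h : AlgebraicIndependent R fun o : Option ι => o.elim a b)
    {N : ℕ} (hN : N ≠ 0) (d : ι → ℕ) :
    AlgebraicIndependent R fun o : Option ι => o.elim (a ^ N) fun i => a ^ d i * b i := by
  have hmon := (MvPolynomial.algebraicIndependent_monomial_one (R := R)
    (linearIndependent_optionElim_single hN d)).map'
    (algebraicIndependent_iff_injective_aeval.mp h)
  convert hmon using 1
  ext (_ | i)
  · simp [MvPolynomial.aeval_monomial]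
  · simp [MvPolynomial.aeval_monomial,
      Finsupp.prod_add_index' (fun _ => pow_zero _) (fun _ _ _ => pow_add _ _ _)]

theorem AlgebraicIndependent.optionElim_polynomialX {ι R S : Type*} [CommRing R] [CommRing S]
    [Algebra R S] {x : ι → S} (hx : AlgebraicIndependent R x) :
    AlgebraicIndependent R fun o : Option ι =>
      o.elim (Polynomial.X : Polynomial S) fun i => algebraMap S (Polynomial S) (x i) := by
  have hsum := hx.sumElim_comp (y := fun _ : Unit => (Polynomial.X : Polynomial S))
    (algebraicIndependent_unique_type_iff.mpr (Polynomial.transcendental_X S))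
  refine (algebraicIndependent_equiv'
    ((Equiv.optionEquivSumPUnit ι).trans (Equiv.sumComm _ _)) ?_).mpr hsum
  ext (_ | i) <;> rfl

theorem MvPolynomial.algebraicIndependent_esymm (σ R : Type*) [CommRing R] [Fintype σ] {n : ℕ}
    (hn : n ≤ Fintype.card σ) :
    AlgebraicIndependent R fun i : Fin n => esymm σ R (i + 1) := by
  rw [algebraicIndependent_iff_injective_aeval]
  have h : ⇑(aeval fun i : Fin n => esymm σ R (i + 1)) = Subtype.val ∘ esymmAlgHom σ R n := by
    funext p
    exact (esymmAlgHom_apply p).symm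
  rw [h]
  exact Subtype.val_injective.comp (esymmAlgHom_injective R hn)

/-- The paper's `f_{k,n-k}`: the variable `(i, j, 0)` is `X i j` and `(i, j, 1)` is `Y i j`. -/
noncomputable def detBihomComponent (R : Type*) [CommRing R] (n k : ℕ) :
    MvPolynomial (Fin n × Fin n × Fin 2) R :=
  ∑ S ∈ powersetCard k (univ : Finset (Fin n)),
    (Matrix.of fun i j => if j ∈ S then X (i, j, 0) else X (i, j, 1)).det

def diagSpecialization {A : Type*} [Zero A] {n : ℕ} (x : Fin n → A) (y : A) :
    Fin n × Fin n × Fin 2 → A :=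
  fun t => if t.1 = t.2.1 then ![x t.1, y] t.2.2 else 0

theorem aeval_diagSpecialization_detBihomComponent {R A : Type*} [CommRing R] [CommRing A]
    [Algebra R A] {n : ℕ} (x : Fin n → A) (y : A) (k : ℕ) :
    aeval (diagSpecialization x y) (detBihomComponent R n k) =
      y ^ (n - k) * aeval x (esymm (Fin n) R k) := by
  rw [detBihomComponent, esymm, map_sum, map_sum, mul_sum]
  refine sum_congr rfl fun S hS => ?_
  have hdiag : (Matrix.of fun i j => if j ∈ S then (X (i, j, 0) : MvPolynomial _ R)
      else X (i, j, 1)).map (aeval (diagSpecialization x y)) =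
      Matrix.diagonal fun j => if j ∈ S then x j else y := by
    ext i j
    by_cases hj : j ∈ S <;> by_cases hij : i = j <;> simp [diagSpecialization, hj, hij]
  rw [AlgHom.map_det, AlgHom.mapMatrix_apply, hdiag, Matrix.det_diagonal, prod_ite,
    filter_mem_eq_inter, univ_inter, filter_not, filter_mem_eq_inter, univ_inter,
    ← compl_eq_univ_sdiff, prod_const, card_compl, Fintype.card_fin, (mem_powersetCard.mp hS).2,
    map_prod, mul_comm]
  simp only [aeval_X]

theorem f_algebraicallyIndependent (K : Type*) [Field K] (n : ℕ) (hn : 1 ≤ n) :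
    AlgebraicIndependent K
      (fun k : Fin (n + 1) =>
        ∑ S ∈ Finset.powersetCard (k : ℕ) (Finset.univ : Finset (Fin n)),
          (Matrix.of fun i j =>
              if j ∈ S then
                (MvPolynomial.X (i, j, (0 : Fin 2)) :
                  MvPolynomial (Fin n × Fin n × Fin 2) K)
              else MvPolynomial.X (i, j, (1 : Fin 2))).det) := by
  change AlgebraicIndependent K fun k : Fin (n + 1) => detBihomComponent K n k
  set S := MvPolynomial (Fin n) K
  set φ := aeval (R := K) (diagSpecialization (algebraMap S (Polynomial S) ∘ X) Polynomial.X)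
  have hφ : φ ∘ (fun k : Fin (n + 1) => detBihomComponent K n k) =
      (fun o : Option (Fin n) => o.elim (Polynomial.X ^ n) fun i =>
        Polynomial.X ^ (n - (i + 1)) * algebraMap S (Polynomial S) (esymm (Fin n) K (i + 1))) ∘
      finSuccEquiv n := by
    ext k : 1
    rw [Function.comp_apply, aeval_diagSpecialization_detBihomComponent,
      aeval_algebraMap_apply, aeval_X_left_apply]
    cases k using Fin.cases <;> simp
  refine .of_comp φ ?_
  rw [hφ, algebraicIndependent_equiv]
  exact (algebraicIndependent_esymm (Fin n) K (by simp)).optionElim_polynomialX.optionElim_pow_mul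
    (by omega) _
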